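/- arXiv:2402.00674 — 2 statements merged into one kernel-verified Lean document; each statement's English description precedes it below -/
import Mathlib

section
/- Let N be a positive integer, C* > 0, a > 1, and for each i = 1,…,N let b_i > 0 and c_i ∈ ℝ with c_i < a·b_i. Let T > 0 and let Z : [0,T] → [0,∞) be absolutely continuous with Z(0) = Z₀. Suppose that for almost every t ∈ [0,T], Z'(t) ≤ C*·(1+t)^{−a}·e^{C*·t/(1+t)}·Z(t)² + C*·Σ_{i=1}^N (1+t)^{c_i − 1 − a·b_i}·e^{C*·b_i·t/(1+t)}·Z(t)^{b_i+1}, and that Z(t) ≤ 2·Z₀ for all t ∈ [0,T]. Then for every t ∈ [0,T], Z(t) ≤ ( 1 + (4·C*·e^{C*}/(a−1))·Z₀ + Σ_{i=1}^N (2^{b_i+1}·C*·e^{C*·b_i}/(a·b_i − c_i))·Z₀^{b_i} )·Z₀. -/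
/-!
Integrating the differential inequality gives `Z t ≤ Z₀ + ∫₀ᵗ (right-hand side)`. On `[0,T]` the
bootstrap bound `Z ≤ 2 Z₀` and `τ / (1 + τ) ≤ 1` dominate the right-hand side by a combination of
powers `(1 + τ) ^ p` with `p < -1` (namely `p = -a` and `p = cᵢ - 1 - a bᵢ`), each of which has
integral at most `1 / (-1 - p)` over `[0, ∞)`.
-/

open MeasureTheory intervalIntegral Real

lemma intervalIntegrable_one_add_rpow (p : ℝ) {t : ℝ} (ht : 0 ≤ t) :
    IntervalIntegrable (fun τ : ℝ => (1 + τ) ^ p) volume 0 t := by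
  refine ContinuousOn.intervalIntegrable fun τ hτ => ?_
  rw [Set.uIcc_of_le ht] at hτ
  exact (continuousAt_const.add continuousAt_id).rpow_const
    (Or.inl (by simp only [Pi.add_apply, id]; linarith [hτ.1])) |>.continuousWithinAt

lemma intervalIntegrable_sum_mul_one_add_rpow {ι : Type*} (s : Finset ι) (K p : ι → ℝ) {t : ℝ}
    (ht : 0 ≤ t) :
    IntervalIntegrable (fun τ : ℝ => ∑ i ∈ s, K i * (1 + τ) ^ p i) volume 0 t := by
  simpa only [Finset.sum_fn] using
    IntervalIntegrable.sum s fun i _ => (intervalIntegrable_one_add_rpow (p i) ht).const_mul (K i)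

lemma integral_one_add_rpow_le {p q t : ℝ} (hpq : p + q = -1) (hq : 0 < q) (ht : 0 ≤ t) :
    ∫ τ in (0:ℝ)..t, (1 + τ) ^ p ≤ 1 / q := by
  have hp : p ≠ -1 := by linarith
  rw [integral_comp_add_left (fun x : ℝ => x ^ p), add_zero,
    integral_rpow (Or.inr ⟨hp, fun h => by
      rw [Set.uIcc_of_le (by linarith)] at h; linarith [h.1]⟩),
    one_rpow, show p + 1 = -q by linarith, div_neg, ← neg_div, neg_sub]
  gcongr
  linarith [rpow_nonneg (by linarith : (0:ℝ) ≤ 1 + t) (-q)]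

lemma integral_const_mul_one_add_rpow_le {K p q t : ℝ} (hK : 0 ≤ K) (hpq : p + q = -1)
    (hq : 0 < q) (ht : 0 ≤ t) :
    ∫ τ in (0:ℝ)..t, K * (1 + τ) ^ p ≤ K / q := by
  rw [intervalIntegral.integral_const_mul, ← mul_one_div]
  exact mul_le_mul_of_nonneg_left (integral_one_add_rpow_le hpq hq ht) hK

lemma mul_div_one_add_le {k τ : ℝ} (hk : 0 ≤ k) (hτ : 0 ≤ τ) : k * τ / (1 + τ) ≤ k := by
  rw [mul_div_assoc]
  exact mul_le_of_le_one_right hk ((div_le_one (by linarith)).2 (by linarith))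

section Majorant

variable {ι : Type*} [Fintype ι] (Cs a Z₀ : ℝ) (b c : ι → ℝ)

/-- The right-hand side of the differential inequality with `Z` replaced by `2 Z₀` and
`τ / (1 + τ)` by `1`. -/
noncomputable def bootstrapMajorant (τ : ℝ) : ℝ :=
  4 * Cs * exp Cs * Z₀ ^ 2 * (1 + τ) ^ (-a)
    + Cs * ∑ i, 2 ^ (b i + 1) * exp (Cs * b i) * Z₀ ^ (b i + 1) * (1 + τ) ^ (c i - 1 - a * b i)

variable {Cs a Z₀ b c}

lemma le_bootstrapMajorant (hCs : 0 ≤ Cs) (hb : ∀ i, 0 ≤ b i) {τ z : ℝ} (hτ : 0 ≤ τ)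
    (hz : 0 ≤ z) (hzZ₀ : z ≤ 2 * Z₀) :
    Cs * (1 + τ) ^ (-a) * exp (Cs * τ / (1 + τ)) * z ^ 2
        + Cs * ∑ i, (1 + τ) ^ (c i - 1 - a * b i) * exp (Cs * b i * τ / (1 + τ)) * z ^ (b i + 1)
      ≤ bootstrapMajorant Cs a Z₀ b c τ := by
  have hZ₀ : 0 ≤ Z₀ := by linarith
  have h1τ : 0 ≤ 1 + τ := by linarith
  refine add_le_add ?_ (mul_le_mul_of_nonneg_left (Finset.sum_le_sum fun i _ => ?_) hCs)
  · calc Cs * (1 + τ) ^ (-a) * exp (Cs * τ / (1 + τ)) * z ^ 2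
        ≤ Cs * (1 + τ) ^ (-a) * exp Cs * (2 * Z₀) ^ 2 := by
          gcongr
          exact mul_div_one_add_le hCs hτ
      _ = 4 * Cs * exp Cs * Z₀ ^ 2 * (1 + τ) ^ (-a) := by ring
  · have hbi : 0 ≤ b i + 1 := by linarith [hb i]
    calc (1 + τ) ^ (c i - 1 - a * b i) * exp (Cs * b i * τ / (1 + τ)) * z ^ (b i + 1)
        ≤ (1 + τ) ^ (c i - 1 - a * b i) * exp (Cs * b i) * (2 * Z₀) ^ (b i + 1) := by
          gcongr
          exact mul_div_one_add_le (mul_nonneg hCs (hb i)) hτ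
      _ = 2 ^ (b i + 1) * exp (Cs * b i) * Z₀ ^ (b i + 1) * (1 + τ) ^ (c i - 1 - a * b i) := by
          rw [mul_rpow zero_le_two hZ₀]; ring

lemma intervalIntegrable_bootstrapMajorant {t : ℝ} (ht : 0 ≤ t) :
    IntervalIntegrable (bootstrapMajorant Cs a Z₀ b c) volume 0 t :=
  ((intervalIntegrable_one_add_rpow _ ht).const_mul _).add
    ((intervalIntegrable_sum_mul_one_add_rpow _ _ _ ht).const_mul _)

lemma integral_bootstrapMajorant_le (hCs : 0 ≤ Cs) (ha : 1 < a) (hb : ∀ i, 0 ≤ b i)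
    (hc : ∀ i, c i < a * b i) (hZ₀ : 0 ≤ Z₀) {t : ℝ} (ht : 0 ≤ t) :
    ∫ τ in (0:ℝ)..t, bootstrapMajorant Cs a Z₀ b c τ
      ≤ ((4 * Cs * exp Cs / (a - 1)) * Z₀
        + ∑ i, (2 ^ (b i + 1) * Cs * exp (Cs * b i) / (a * b i - c i)) * Z₀ ^ (b i)) * Z₀ := by
  unfold bootstrapMajorant
  rw [integral_add ((intervalIntegrable_one_add_rpow _ ht).const_mul _)
      ((intervalIntegrable_sum_mul_one_add_rpow _ _ _ ht).const_mul _),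
    intervalIntegral.integral_const_mul Cs,
    integral_finsetSum fun i _ => (intervalIntegrable_one_add_rpow _ ht).const_mul _]
  calc _ ≤ 4 * Cs * exp Cs * Z₀ ^ 2 / (a - 1)
        + Cs * ∑ i, 2 ^ (b i + 1) * exp (Cs * b i) * Z₀ ^ (b i + 1) / (a * b i - c i) := by
        gcongr with i
        · exact integral_const_mul_one_add_rpow_le (by positivity) (by ring) (by linarith) ht
        · exact integral_const_mul_one_add_rpow_le (by positivity) (by ring)
            (sub_pos.2 (hc i)) ht
    _ = _ := by
        rw [add_mul, Finset.mul_sum, Finset.sum_mul]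
        congr 1
        · ring
        · refine Finset.sum_congr rfl fun i _ => ?_
          rw [rpow_add_one' hZ₀ (by linarith [hb i])]
          ring

end Majorant

theorem bootstrap_integrated_estimate_general
    (N : ℕ) (Cs : ℝ) (hCs : 0 < Cs) (a : ℝ) (ha : 1 < a)
    (b c : Fin N → ℝ) (hb : ∀ i, 0 < b i) (hc : ∀ i, c i < a * b i)
    (T : ℝ) (Z Z' : ℝ → ℝ) (Z₀ : ℝ) (hZ₀ : Z 0 = Z₀)
    (hpos : ∀ t ∈ Set.Icc (0:ℝ) T, 0 ≤ Z t)
    (hint : ∀ s t : ℝ, 0 ≤ s → s ≤ t → t ≤ T → IntervalIntegrable Z' volume s t)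
    (hftc : ∀ s t : ℝ, 0 ≤ s → s ≤ t → t ≤ T → Z t - Z s = ∫ τ in s..t, Z' τ)
    (hineq : ∀ᵐ t : ℝ ∂volume, t ∈ Set.Icc (0:ℝ) T →
      Z' t ≤ Cs * (1 + t) ^ (-a) * Real.exp (Cs * t / (1 + t)) * Z t ^ 2
        + Cs * ∑ i, (1 + t) ^ (c i - 1 - a * b i) *
            Real.exp (Cs * b i * t / (1 + t)) * Z t ^ (b i + 1))
    (hboot : ∀ t ∈ Set.Icc (0:ℝ) T, Z t ≤ 2 * Z₀) :
    ∀ t ∈ Set.Icc (0:ℝ) T,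
      Z t ≤ (1 + (4 * Cs * Real.exp Cs / (a - 1)) * Z₀
        + ∑ i, ((2:ℝ) ^ (b i + 1) * Cs * Real.exp (Cs * b i) / (a * b i - c i))
            * Z₀ ^ (b i)) * Z₀ := by
  rintro t ⟨ht0, htT⟩
  have hZ₀0 : 0 ≤ Z₀ := hZ₀ ▸ hpos 0 ⟨le_rfl, ht0.trans htT⟩
  have hb' : ∀ i, 0 ≤ b i := fun i => (hb i).le
  have hle : ∀ᵐ τ ∂volume.restrict (Set.Icc 0 t), Z' τ ≤ bootstrapMajorant Cs a Z₀ b c τ := by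
    rw [ae_restrict_iff' measurableSet_Icc]
    filter_upwards [hineq] with τ hτ hτt
    have hτT : τ ∈ Set.Icc 0 T := ⟨hτt.1, hτt.2.trans htT⟩
    exact (hτ hτT).trans (le_bootstrapMajorant hCs.le hb' hτt.1 (hpos τ hτT) (hboot τ hτT))
  calc Z t = Z₀ + ∫ τ in (0:ℝ)..t, Z' τ := by rw [← hZ₀, ← hftc 0 t le_rfl ht0 htT]; ring
    _ ≤ Z₀ + ∫ τ in (0:ℝ)..t, bootstrapMajorant Cs a Z₀ b c τ := by
        gcongr
        exact integral_mono_ae_restrict ht0 (hint 0 t le_rfl ht0 htT)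
          (intervalIntegrable_bootstrapMajorant ht0) hle
    _ ≤ Z₀ + ((4 * Cs * exp Cs / (a - 1)) * Z₀
        + ∑ i, (2 ^ (b i + 1) * Cs * exp (Cs * b i) / (a * b i - c i)) * Z₀ ^ (b i)) * Z₀ := by
        gcongr
        exact integral_bootstrapMajorant_le hCs.le ha hb' hc hZ₀0 ht0
    _ = _ := by ring

/-- The integrated bootstrap estimate in the proof of the Grönwall-type lemma
(display (2.9) in the paper). If `Z : [0,T] → [0,∞)` is absolutely continuous with
a.e. derivative `Z'` satisfying
`Z'(t) ≤ C*·(1+t)^{-a}·e^{C*·t/(1+t)}·Z(t)² + C*·Σᵢ (1+t)^{cᵢ-1-a·bᵢ}·e^{C*·bᵢ·t/(1+t)}·Z(t)^{bᵢ+1}`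
for a.e. `t ∈ [0,T]`, and if `Z(t) ≤ 2·Z₀` on `[0,T]` where `Z₀ = Z(0)`, then
`Z(t) ≤ (1 + (4C*e^{C*}/(a-1))·Z₀ + Σᵢ (2^{bᵢ+1}C*e^{C*bᵢ}/(a·bᵢ-cᵢ))·Z₀^{bᵢ})·Z₀`
for every `t ∈ [0,T]`. -/
theorem bootstrap_integrated_estimate
    (N : ℕ) (hN : 0 < N) (Cs : ℝ) (hCs : 0 < Cs) (a : ℝ) (ha : 1 < a)
    (b c : Fin N → ℝ) (hb : ∀ i, 0 < b i) (hc : ∀ i, c i < a * b i)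
    (T : ℝ) (hT : 0 < T) (Z Z' : ℝ → ℝ) (Z₀ : ℝ) (hZ₀ : Z 0 = Z₀)
    (hpos : ∀ t ∈ Set.Icc (0:ℝ) T, 0 ≤ Z t)
    (hint : ∀ s t : ℝ, 0 ≤ s → s ≤ t → t ≤ T → IntervalIntegrable Z' volume s t)
    (hftc : ∀ s t : ℝ, 0 ≤ s → s ≤ t → t ≤ T → Z t - Z s = ∫ τ in s..t, Z' τ)
    (hderiv : ∀ᵐ t : ℝ ∂volume, t ∈ Set.Icc (0:ℝ) T → HasDerivAt Z (Z' t) t)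
    (hineq : ∀ᵐ t : ℝ ∂volume, t ∈ Set.Icc (0:ℝ) T →
      Z' t ≤ Cs * (1 + t) ^ (-a) * Real.exp (Cs * t / (1 + t)) * Z t ^ 2
        + Cs * ∑ i, (1 + t) ^ (c i - 1 - a * b i) *
            Real.exp (Cs * b i * t / (1 + t)) * Z t ^ (b i + 1))
    (hboot : ∀ t ∈ Set.Icc (0:ℝ) T, Z t ≤ 2 * Z₀) :
    ∀ t ∈ Set.Icc (0:ℝ) T,
      Z t ≤ (1 + (4 * Cs * Real.exp Cs / (a - 1)) * Z₀
        + ∑ i, ((2:ℝ) ^ (b i + 1) * Cs * Real.exp (Cs * b i) / (a * b i - c i))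
            * Z₀ ^ (b i)) * Z₀ :=
  bootstrap_integrated_estimate_general N Cs hCs a ha b c hb hc T Z Z' Z₀ hZ₀ hpos hint hftc hineq
    hboot
end

section
/- Let d ≥ 1 be an integer, T > 0, γ̃ ∈ ℝ, and M ≥ 0. Let n : [0,T] × ℝ^d → ℝ be continuously differentiable with n(t,x) = 0 whenever x lies outside a fixed compact set 𝒦 ⊂ ℝ^d, let w, v : [0,T] × ℝ^d → ℝ^d be continuously differentiable vector fields such that sup_x |∇_x·w(t,x)| < ∞ for each t, and let κ : [0,T] × ℝ^d → ℝ be measurable with |κ(t,x)| ≤ M for all (t,x). Assume that ∂_t n + (w+v)·∇_x n + γ̃·n·∇_x·(w+v) = 0 on [0,T] × ℝ^d, and that ∇_x·v(t,x) = d/(1+t) + κ(t,x)/(1+t)² for all (t,x). Then E(t) := ∫_{ℝ^d} n(t,x)² dx is differentiable in t, and for all t ∈ [0,T], (1/2)·E'(t) + ( d·(γ̃ − 1/2)/(1+t) )·E(t) ≤ |γ̃ − 1/2|·( sup_x |∇_x·w(t,x)| + M/(1+t)² )·E(t). -/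
/-!
Multiplying the transport equation by `2n` gives
`∂ₜ(n²) = -(u · ∇(n²) + 2γ̃ n² ∇ · u)` with `u = w + v`, so after an integration by parts
`E' = (1 - 2γ̃) ∫ n² ∇ · u`. The part `d/(1+t)` of `∇ · v` produces exactly the term
`d(γ̃ - 1/2)/(1+t) · E`, and what remains, `∇ · w + κ/(1+t)²`, is bounded pointwise by
`sup |∇ · w| + M/(1+t)²`. Differentiating under the integral sign is legitimate because
`∂ₜ(n²)` is continuous on `[0,T] × 𝒦`, hence bounded there, and vanishes off `𝒦`.
-/

open MeasureTheory

/-- The (spatial) divergence of a vector field on `ℝ^d`. -/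
noncomputable def divg {d : ℕ}
    (f : EuclideanSpace ℝ (Fin d) → EuclideanSpace ℝ (Fin d))
    (x : EuclideanSpace ℝ (Fin d)) : ℝ :=
  ∑ i, fderiv ℝ f x (EuclideanSpace.single i 1) i

open Set

theorem hasDerivWithinAt_integral_of_convex_of_deriv_le {α E : Type*} [MeasurableSpace α]
    {μ : Measure α} [NormedAddCommGroup E] [NormedSpace ℝ E] [CompleteSpace E]
    {s : Set ℝ} (hs : Convex ℝ s) {F F' : ℝ → α → E} {bound : α → ℝ}
    (hF_int : ∀ t ∈ s, Integrable (F t) μ)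
    (hF' : ∀ t ∈ s, ∀ x, HasDerivWithinAt (F · x) (F' t x) s t)
    (h_bound : ∀ t ∈ s, ∀ x, ‖F' t x‖ ≤ bound x) (bound_integrable : Integrable bound μ)
    {t₀ : ℝ} (ht₀ : t₀ ∈ s) :
    HasDerivWithinAt (fun t => ∫ x, F t x ∂μ) (∫ x, F' t₀ x ∂μ) s t₀ := by
  rw [hasDerivWithinAt_iff_tendsto_slope]
  have hslope : ∀ t ∈ s \ {t₀}, ∀ x, ‖slope (F · x) t₀ t‖ ≤ bound x := fun t ht x => by
    have hmvt := hs.norm_image_sub_le_of_norm_hasDerivWithin_le (fun t ht => hF' t ht x)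
      (fun t ht => h_bound t ht x) ht₀ ht.1
    rw [slope_def_module, norm_smul, norm_inv,
      inv_mul_le_iff₀ (norm_pos_iff.2 (sub_ne_zero.2 ht.2))]
    simpa only [mul_comm] using hmvt
  refine (tendsto_integral_filter_of_dominated_convergence bound ?_ ?_ bound_integrable
    (ae_of_all _ fun x => hasDerivWithinAt_iff_tendsto_slope.mp (hF' t₀ ht₀ x))).congr' ?_
  · filter_upwards [self_mem_nhdsWithin] with t ht
    exact ((hF_int t ht.1).sub (hF_int t₀ ht₀)).aestronglyMeasurable.const_smul _
  · filter_upwards [self_mem_nhdsWithin] with t ht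
    exact ae_of_all _ (hslope t ht)
  · filter_upwards [self_mem_nhdsWithin] with t ht
    simp only [slope_def_module]
    rw [integral_smul, integral_sub (hF_int t ht.1) (hF_int t₀ ht₀)]

theorem abs_integral_mul_le_of_abs_le {α : Type*} [MeasurableSpace α] {μ : Measure α}
    {f g : α → ℝ} {B : ℝ} (hf₀ : ∀ x, 0 ≤ f x) (hf : Integrable f μ) (hg : ∀ x, |g x| ≤ B) :
    |∫ x, f x * g x ∂μ| ≤ B * ∫ x, f x ∂μ := by
  rw [← integral_const_mul, ← Real.norm_eq_abs]
  refine norm_integral_le_of_norm_le (hf.const_mul B) (ae_of_all _ fun x => ?_)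
  rw [norm_mul, Real.norm_of_nonneg (hf₀ x), mul_comm]
  exact mul_le_mul_of_nonneg_right (hg x) (hf₀ x)

theorem half_mul_integral_add_le_of_abs_sub_le {α : Type*} [MeasurableSpace α]
    {μ : Measure α} {f g : α → ℝ} (γ c B : ℝ) (hf₀ : ∀ x, 0 ≤ f x) (hf : Integrable f μ)
    (hfg : Integrable (fun x => f x * g x) μ) (hg : ∀ x, |g x - c| ≤ B) :
    1 / 2 * ((1 - 2 * γ) * ∫ x, f x * g x ∂μ) + c * (γ - 1 / 2) * ∫ x, f x ∂μ ≤
      |γ - 1 / 2| * B * ∫ x, f x ∂μ := by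
  have hsplit : 1 / 2 * ((1 - 2 * γ) * ∫ x, f x * g x ∂μ) + c * (γ - 1 / 2) * ∫ x, f x ∂μ =
      -(γ - 1 / 2) * ∫ x, f x * (g x - c) ∂μ := by
    simp only [mul_sub]
    rw [integral_sub hfg (hf.mul_const c), integral_mul_const]
    ring
  rw [hsplit, mul_assoc]
  refine (le_abs_self _).trans ?_
  rw [abs_mul, abs_neg]
  exact mul_le_mul_of_nonneg_left (abs_integral_mul_le_of_abs_le hf₀ hf hg) (abs_nonneg _)

section Slice

variable {E G : Type*} [NormedAddCommGroup E] [NormedSpace ℝ E]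
  [NormedAddCommGroup G] [NormedSpace ℝ G] {s : Set ℝ} {f : ℝ × E → G} {t : ℝ}

theorem ContDiffOn.contDiff_slice {k : WithTop ℕ∞} (hf : ContDiffOn ℝ k f (s ×ˢ univ))
    (ht : t ∈ s) : ContDiff ℝ k (fun x => f (t, x)) :=
  contDiffOn_univ.mp <|
    hf.comp (contDiff_const.prodMk contDiff_id).contDiffOn fun _ _ => ⟨ht, trivial⟩

theorem DifferentiableOn.fderiv_slice (hf : DifferentiableOn ℝ f (s ×ˢ univ)) (ht : t ∈ s)
    (x : E) :
    fderiv ℝ (fun y => f (t, y)) x =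
      (fderivWithin ℝ f (s ×ˢ univ) (t, x)).comp (ContinuousLinearMap.inr ℝ ℝ E) := by
  have hcomp := (hf (t, x) ⟨ht, trivial⟩).hasFDerivWithinAt.comp x
    (hasFDerivAt_prodMk_right t x).hasFDerivWithinAt (s := univ) (fun _ _ => ⟨ht, trivial⟩)
  exact (hasFDerivWithinAt_univ.mp hcomp).fderiv

theorem ContDiffOn.continuousOn_fderiv_slice (hf : ContDiffOn ℝ 1 f (s ×ˢ univ))
    (hs : UniqueDiffOn ℝ s) :
    ContinuousOn (fun p : ℝ × E => fderiv ℝ (fun y => f (p.1, y)) p.2) (s ×ˢ univ) := by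
  have hcont := (hf.continuousOn_fderivWithin (hs.prod uniqueDiffOn_univ) le_rfl).clm_comp
    (continuousOn_const (c := ContinuousLinearMap.inr ℝ ℝ E))
  refine hcont.congr fun p hp => ?_
  exact (hf.differentiableOn one_ne_zero).fderiv_slice hp.1 p.2

end Slice

section Divergence

variable {d : ℕ}

local notation "𝔼" => EuclideanSpace ℝ (Fin d)

theorem divg_add {u u' : 𝔼 → 𝔼} {x : 𝔼} (hu : DifferentiableAt ℝ u x)
    (hu' : DifferentiableAt ℝ u' x) :
    divg (fun y => u y + u' y) x = divg u x + divg u' x := by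
  simp only [divg, ← Finset.sum_add_distrib, fderiv_fun_add hu hu']
  rfl

theorem fderiv_apply_coord {u : 𝔼 → 𝔼} {x : 𝔼} (hu : DifferentiableAt ℝ u x) (i : Fin d)
    (e : 𝔼) : fderiv ℝ (fun y => u y i) x e = fderiv ℝ u x e i :=
  congrArg (· e) ((EuclideanSpace.proj (𝕜 := ℝ) i).hasFDerivAt.comp x hu.hasFDerivAt).fderiv

theorem ContDiff.continuous_divg {u : 𝔼 → 𝔼} (hu : ContDiff ℝ 1 u) : Continuous (divg u) :=
  continuous_finsetSum _ fun i _ => (EuclideanSpace.proj i).continuous.comp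
    ((hu.continuous_fderiv one_ne_zero).clm_apply continuous_const)

theorem ContDiffOn.continuousOn_divg_slice {s : Set ℝ} {u : ℝ × 𝔼 → 𝔼}
    (hu : ContDiffOn ℝ 1 u (s ×ˢ univ)) (hs : UniqueDiffOn ℝ s) :
    ContinuousOn (fun p : ℝ × 𝔼 => divg (fun y => u (p.1, y)) p.2) (s ×ˢ univ) :=
  continuousOn_finsetSum _ fun i _ => (EuclideanSpace.proj i).continuous.comp_continuousOn
    ((hu.continuousOn_fderiv_slice hs).clm_apply continuousOn_const)

theorem integral_fderiv_apply_eq_neg_integral_mul_divg {Q : 𝔼 → ℝ} {u : 𝔼 → 𝔼}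
    (hQ : ContDiff ℝ 1 Q) (hQ_supp : HasCompactSupport Q) (hu : ContDiff ℝ 1 u) :
    ∫ x, fderiv ℝ Q x (u x) = -∫ x, Q x * divg u x := by
  have hQd : Differentiable ℝ Q := hQ.differentiable one_ne_zero
  have hud : Differentiable ℝ u := hu.differentiable one_ne_zero
  have hui : ∀ i, ContDiff ℝ 1 (fun y => u y i) := fun i =>
    (EuclideanSpace.proj (𝕜 := ℝ) i).contDiff.comp hu
  have hQ' : ∀ e, Continuous (fun x => fderiv ℝ Q x e) := fun e =>
    (hQ.continuous_fderiv one_ne_zero).clm_apply continuous_const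
  have hexpand : ∀ x, fderiv ℝ Q x (u x) =
      ∑ i, fderiv ℝ Q x (EuclideanSpace.single i 1) * u x i := fun x => by
    conv_lhs => rw [← (EuclideanSpace.basisFun (Fin d) ℝ).sum_repr (u x)]
    simp [map_sum, mul_comm]
  have hdivg : ∀ x, Q x * divg u x =
      ∑ i, Q x * fderiv ℝ (fun y => u y i) x (EuclideanSpace.single i 1) := fun x => by
    simp only [divg, Finset.mul_sum, fderiv_apply_coord (hud x)]
  have hint_left : ∀ i, Integrable (fun x => fderiv ℝ Q x (EuclideanSpace.single i 1) * u x i) :=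
    fun i => ((hQ' _).mul (hui i).continuous).integrable_of_hasCompactSupport
      (hQ_supp.fderiv_apply (𝕜 := ℝ) _).mul_right
  have hint_right : ∀ i, Integrable
      (fun x => Q x * fderiv ℝ (fun y => u y i) x (EuclideanSpace.single i 1)) :=
    fun i => (hQ.continuous.mul (((hui i).continuous_fderiv one_ne_zero).clm_apply
      continuous_const)).integrable_of_hasCompactSupport hQ_supp.mul_right
  simp only [hexpand, hdivg]
  rw [integral_finsetSum _ fun i _ => hint_left i, integral_finsetSum _ fun i _ => hint_right i,
    ← Finset.sum_neg_distrib]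
  refine Finset.sum_congr rfl fun i _ => ?_
  rw [integral_mul_fderiv_eq_neg_fderiv_mul_of_integrable (hint_left i) (hint_right i)
    ((hQ.continuous.mul (hui i).continuous).integrable_of_hasCompactSupport hQ_supp.mul_right)
    (fun x _ => hQd x) (fun x _ => (hui i).differentiable one_ne_zero x), neg_neg]

/-- The value of `∂ₜ n` dictated by `∂ₜ n + u · ∇n + γ n ∇ · u = 0`. -/
noncomputable def transportRate (γ : ℝ) (n : 𝔼 → ℝ) (u : 𝔼 → 𝔼) (x : 𝔼) : ℝ :=
  -(fderiv ℝ n x (u x) + γ * n x * divg u x)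

theorem integral_two_mul_transportRate (γ : ℝ) {n : 𝔼 → ℝ} {u : 𝔼 → 𝔼} (hn : ContDiff ℝ 1 n)
    (hn_supp : HasCompactSupport n) (hu : ContDiff ℝ 1 u) :
    ∫ x, 2 * n x * transportRate γ n u x = (1 - 2 * γ) * ∫ x, n x ^ 2 * divg u x := by
  have hsq : ContDiff ℝ 1 (fun x => n x ^ 2) := hn.pow 2
  have hsq_supp : HasCompactSupport (fun x => n x ^ 2) := hn_supp.comp_left (g := (· ^ 2)) (by simp)
  have hpointwise : ∀ x, 2 * n x * transportRate γ n u x =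
      -(fderiv ℝ (fun y => n y ^ 2) x (u x) + 2 * γ * (n x ^ 2 * divg u x)) := fun x => by
    rw [transportRate, fderiv_fun_pow 2 ((hn.differentiable one_ne_zero) x)]
    simp only [smul_apply, smul_eq_mul, nsmul_eq_mul]
    ring
  have hint_grad : Integrable (fun x => fderiv ℝ (fun y => n y ^ 2) x (u x)) :=
    ((hsq.continuous_fderiv one_ne_zero).clm_apply hu.continuous).integrable_of_hasCompactSupport
      ((hsq_supp.fderiv (𝕜 := ℝ)).mono fun x hx h => hx (by simp [h]))
  have hint_div : Integrable (fun x => n x ^ 2 * divg u x) :=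
    (hsq.continuous.mul hu.continuous_divg).integrable_of_hasCompactSupport hsq_supp.mul_right
  simp only [hpointwise]
  rw [integral_neg, integral_add hint_grad (hint_div.const_mul _), integral_const_mul,
    integral_fderiv_apply_eq_neg_integral_mul_divg hsq hsq_supp hu]
  ring

theorem ContDiffOn.continuousOn_transportRate_slice (γ : ℝ) {s : Set ℝ} {n : ℝ × 𝔼 → ℝ}
    {u : ℝ × 𝔼 → 𝔼} (hn : ContDiffOn ℝ 1 n (s ×ˢ univ)) (hu : ContDiffOn ℝ 1 u (s ×ˢ univ))
    (hs : UniqueDiffOn ℝ s) :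
    ContinuousOn (fun p : ℝ × 𝔼 => transportRate γ (fun y => n (p.1, y)) (fun y => u (p.1, y)) p.2)
      (s ×ˢ univ) :=
  (((hn.continuousOn_fderiv_slice hs).clm_apply hu.continuousOn).add
    ((continuousOn_const.mul hn.continuousOn).mul (hu.continuousOn_divg_slice hs))).neg

theorem hasDerivWithinAt_integral_sq_of_transport {γ a b : ℝ} (hab : a < b) {K : Set 𝔼}
    (hK : IsCompact K) {n : ℝ → 𝔼 → ℝ} {u : ℝ → 𝔼 → 𝔼}
    (hn : ContDiffOn ℝ 1 (fun p : ℝ × 𝔼 => n p.1 p.2) (Icc a b ×ˢ univ))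
    (hu : ContDiffOn ℝ 1 (fun p : ℝ × 𝔼 => u p.1 p.2) (Icc a b ×ˢ univ))
    (hsupp : ∀ t ∈ Icc a b, ∀ x ∉ K, n t x = 0)
    (hpde : ∀ t ∈ Icc a b, ∀ x,
      HasDerivWithinAt (n · x) (transportRate γ (n t) (u t) x) (Icc a b) t)
    {t₀ : ℝ} (ht₀ : t₀ ∈ Icc a b) :
    HasDerivWithinAt (fun t => ∫ x, n t x ^ 2)
      (∫ x, 2 * n t₀ x * transportRate γ (n t₀) (u t₀) x) (Icc a b) t₀ := by
  set rate : ℝ → 𝔼 → ℝ := fun t x => 2 * n t x * transportRate γ (n t) (u t) x with hrate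
  have hsq_int : ∀ t ∈ Icc a b, Integrable (fun x => n t x ^ 2) := fun t ht =>
    ((hn.contDiff_slice ht).continuous.pow 2).integrable_of_hasCompactSupport
      (HasCompactSupport.intro hK fun x hx => by simp [hsupp t ht x hx])
  have hrate_deriv : ∀ t ∈ Icc a b, ∀ x,
      HasDerivWithinAt (fun s => n s x ^ 2) (rate t x) (Icc a b) t := fun t ht x =>
    ((hpde t ht x).pow 2).congr_deriv (by simp only [hrate]; push_cast; ring)
  obtain ⟨C, hC⟩ := (isCompact_Icc.prod hK).exists_bound_of_continuousOn
    (f := fun p => rate p.1 p.2) <| ContinuousOn.mono (s := Icc a b ×ˢ univ)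
      ((continuousOn_const.mul hn.continuousOn).mul
        (hn.continuousOn_transportRate_slice γ hu (uniqueDiffOn_Icc hab)))
      (prod_mono_right (subset_univ K))
  have hrate_le : ∀ t ∈ Icc a b, ∀ x, ‖rate t x‖ ≤ K.indicator (fun _ => C) x := by
    intro t ht x
    by_cases hx : x ∈ K
    · simpa [indicator_of_mem hx] using hC (t, x) ⟨ht, hx⟩
    · simp [indicator_of_notMem hx, hrate, hsupp t ht x hx]
  exact hasDerivWithinAt_integral_of_convex_of_deriv_le (convex_Icc a b) hsq_int hrate_deriv
    hrate_le (integrableOn_const hK.measure_lt_top.ne |>.integrable_indicator hK.measurableSet) ht₀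

theorem half_integral_mul_transportRate_add_le {n : 𝔼 → ℝ} {u : 𝔼 → 𝔼} (hn : ContDiff ℝ 1 n)
    (hn_supp : HasCompactSupport n) (hu : ContDiff ℝ 1 u) (γ c B : ℝ)
    (hdivg : ∀ x, |divg u x - c| ≤ B) :
    1 / 2 * (∫ x, 2 * n x * transportRate γ n u x) + c * (γ - 1 / 2) * ∫ x, n x ^ 2 ≤
      |γ - 1 / 2| * B * ∫ x, n x ^ 2 := by
  have hsq_supp : HasCompactSupport (fun x => n x ^ 2) := hn_supp.comp_left (g := (· ^ 2)) (by simp)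
  rw [integral_two_mul_transportRate γ hn hn_supp hu]
  exact half_mul_integral_add_le_of_abs_sub_le γ c B (fun x => sq_nonneg _)
    ((hn.continuous.pow 2).integrable_of_hasCompactSupport hsq_supp)
    (((hn.continuous.pow 2).mul hu.continuous_divg).integrable_of_hasCompactSupport
      hsq_supp.mul_right) hdivg

end Divergence

theorem sound_speed_L2_decay_inequality_general
    (d : ℕ) (T : ℝ) (hT : 0 < T) (γ' : ℝ) (M : ℝ)
    (n : ℝ → EuclideanSpace ℝ (Fin d) → ℝ)
    (w v : ℝ → EuclideanSpace ℝ (Fin d) → EuclideanSpace ℝ (Fin d))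
    (κ : ℝ → EuclideanSpace ℝ (Fin d) → ℝ)
    (hn : ContDiffOn ℝ 1 (fun p : ℝ × EuclideanSpace ℝ (Fin d) => n p.1 p.2)
      (Set.Icc 0 T ×ˢ Set.univ))
    (𝒦 : Set (EuclideanSpace ℝ (Fin d))) (h𝒦 : IsCompact 𝒦)
    (hsupp : ∀ t ∈ Set.Icc (0:ℝ) T, ∀ x ∉ 𝒦, n t x = 0)
    (hw : ContDiffOn ℝ 1 (fun p : ℝ × EuclideanSpace ℝ (Fin d) => w p.1 p.2)
      (Set.Icc 0 T ×ˢ Set.univ))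
    (hv : ContDiffOn ℝ 1 (fun p : ℝ × EuclideanSpace ℝ (Fin d) => v p.1 p.2)
      (Set.Icc 0 T ×ˢ Set.univ))
    (hwbdd : ∀ t ∈ Set.Icc (0:ℝ) T,
      BddAbove (Set.range fun x => |divg (w t) x|))
    (hκbdd : ∀ t x, |κ t x| ≤ M)
    (hpde : ∀ t ∈ Set.Icc (0:ℝ) T, ∀ x,
      HasDerivWithinAt (fun s => n s x)
        (-(fderiv ℝ (n t) x (w t x + v t x)
            + γ' * n t x * divg (fun y => w t y + v t y) x))
        (Set.Icc 0 T) t)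
    (hdivv : ∀ t ∈ Set.Icc (0:ℝ) T, ∀ x,
      divg (v t) x = (d : ℝ) / (1 + t) + κ t x / (1 + t) ^ 2) :
    ∃ E' : ℝ → ℝ,
      (∀ t ∈ Set.Icc (0:ℝ) T,
        HasDerivWithinAt (fun s => ∫ x, (n s x) ^ 2) (E' t) (Set.Icc 0 T) t) ∧
      ∀ t ∈ Set.Icc (0:ℝ) T,
        (1/2) * E' t + ((d : ℝ) * (γ' - 1/2) / (1 + t)) * ∫ x, (n t x) ^ 2 ≤
          |γ' - 1/2| * ((⨆ x, |divg (w t) x|) + M / (1 + t) ^ 2)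
            * ∫ x, (n t x) ^ 2 := by
  refine ⟨_, fun t ht => hasDerivWithinAt_integral_sq_of_transport hT h𝒦 hn (hw.add hv) hsupp
    hpde ht, fun t ht => ?_⟩
  have hn_t : ContDiff ℝ 1 (n t) := hn.contDiff_slice ht
  have hw_t : ContDiff ℝ 1 (w t) := hw.contDiff_slice ht
  have hv_t : ContDiff ℝ 1 (v t) := hv.contDiff_slice ht
  rw [mul_div_right_comm]
  refine half_integral_mul_transportRate_add_le hn_t
    (HasCompactSupport.intro h𝒦 (hsupp t ht)) (hw_t.add hv_t) γ' _ _ fun x => ?_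
  rw [divg_add (hw_t.differentiable one_ne_zero x) (hv_t.differentiable one_ne_zero x),
    hdivv t ht x, add_left_comm, add_sub_cancel_left]
  refine (abs_add_le _ _).trans (add_le_add (le_ciSup (hwbdd t ht) x) ?_)
  rw [abs_div, abs_of_nonneg (sq_nonneg (1 + t))]
  exact div_le_div_of_nonneg_right (hκbdd t x) (sq_nonneg _)

/-- `L²` decay differential inequality for the sound speed variable `n`:
if `∂ₜ n + (w+v)·∇ₓn + γ̃ n ∇ₓ·(w+v) = 0` on `[0,T] × ℝ^d`, with `n` compactly
supported in space, `∇ₓ·w` bounded in `x`, and `∇ₓ·v = d/(1+t) + κ/(1+t)²` with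
`|κ| ≤ M`, then `E(t) := ∫ n(t,x)² dx` is differentiable and
`(1/2)E'(t) + (d(γ̃-1/2)/(1+t))E(t)
  ≤ |γ̃-1/2|(sup_x |∇ₓ·w(t,x)| + M/(1+t)²)E(t)` on `[0,T]`. -/
theorem sound_speed_L2_decay_inequality
    (d : ℕ) (hd : 1 ≤ d) (T : ℝ) (hT : 0 < T) (γ' : ℝ) (M : ℝ) (hM : 0 ≤ M)
    (n : ℝ → EuclideanSpace ℝ (Fin d) → ℝ)
    (w v : ℝ → EuclideanSpace ℝ (Fin d) → EuclideanSpace ℝ (Fin d))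
    (κ : ℝ → EuclideanSpace ℝ (Fin d) → ℝ)
    (hn : ContDiffOn ℝ 1 (fun p : ℝ × EuclideanSpace ℝ (Fin d) => n p.1 p.2)
      (Set.Icc 0 T ×ˢ Set.univ))
    (𝒦 : Set (EuclideanSpace ℝ (Fin d))) (h𝒦 : IsCompact 𝒦)
    (hsupp : ∀ t ∈ Set.Icc (0:ℝ) T, ∀ x ∉ 𝒦, n t x = 0)
    (hw : ContDiffOn ℝ 1 (fun p : ℝ × EuclideanSpace ℝ (Fin d) => w p.1 p.2)
      (Set.Icc 0 T ×ˢ Set.univ))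
    (hv : ContDiffOn ℝ 1 (fun p : ℝ × EuclideanSpace ℝ (Fin d) => v p.1 p.2)
      (Set.Icc 0 T ×ˢ Set.univ))
    (hwbdd : ∀ t ∈ Set.Icc (0:ℝ) T,
      BddAbove (Set.range fun x => |divg (w t) x|))
    (hκmeas : Measurable (fun p : ℝ × EuclideanSpace ℝ (Fin d) => κ p.1 p.2))
    (hκbdd : ∀ t x, |κ t x| ≤ M)
    (hpde : ∀ t ∈ Set.Icc (0:ℝ) T, ∀ x,
      HasDerivWithinAt (fun s => n s x)
        (-(fderiv ℝ (n t) x (w t x + v t x)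
            + γ' * n t x * divg (fun y => w t y + v t y) x))
        (Set.Icc 0 T) t)
    (hdivv : ∀ t ∈ Set.Icc (0:ℝ) T, ∀ x,
      divg (v t) x = (d : ℝ) / (1 + t) + κ t x / (1 + t) ^ 2) :
    ∃ E' : ℝ → ℝ,
      (∀ t ∈ Set.Icc (0:ℝ) T,
        HasDerivWithinAt (fun s => ∫ x, (n s x) ^ 2) (E' t) (Set.Icc 0 T) t) ∧
      ∀ t ∈ Set.Icc (0:ℝ) T,
        (1/2) * E' t + ((d : ℝ) * (γ' - 1/2) / (1 + t)) * ∫ x, (n t x) ^ 2 ≤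
          |γ' - 1/2| * ((⨆ x, |divg (w t) x|) + M / (1 + t) ^ 2)
            * ∫ x, (n t x) ^ 2 :=
  sound_speed_L2_decay_inequality_general d T hT γ' M n w v κ hn 𝒦 h𝒦 hsupp hw hv hwbdd hκbdd hpde
    hdivv
end
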